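/- arXiv:1507.07832 — 4 statements merged into one kernel-verified Lean document; each statement's English description precedes it below -/
import Mathlib

section
/- Let a, b, c ≥ 2 be integers and let l₁, l₂, l₃ be integers with 0 ≤ l₁ ≤ a−2, 0 ≤ l₂ ≤ b−2, 0 ≤ l₃ ≤ c−2. Define the 4×4 matrices over T = k[x,y,z]: u with rows (0, x^{1+l₁}, y^{1+l₂}, z^{1+l₃}), (x^{1+l₁}, 0, z^{c−1−l₃}, −y^{b−1−l₂}), (y^{1+l₂}, −z^{c−1−l₃}, 0, x^{a−1−l₁}), (z^{1+l₃}, y^{b−1−l₂}, −x^{a−1−l₁}, 0); and v with rows (0, x^{a−1−l₁}, y^{b−1−l₂}, z^{c−1−l₃}), (x^{a−1−l₁}, 0, −z^{1+l₃}, y^{1+l₂}), (y^{b−1−l₂}, z^{1+l₃}, 0, −x^{1+l₁}), (z^{c−1−l₃}, −y^{1+l₂}, x^{1+l₁}, 0). Then u·v = (x^a + y^b + z^c)·I₄ = v·u, i.e., (u,v) is a matrix factorization of x^a + y^b + z^c. -/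
open MvPolynomial

/-- The matrix `u_x` of Proposition `prop:mf:abc:rk2` for the extension bundle with
parameters `(l₁, l₂, l₃)` and weight type `(a, b, c)`. -/
noncomputable def uExt (k : Type*) [Field k] (a b c l₁ l₂ l₃ : ℕ) :
    Matrix (Fin 4) (Fin 4) (MvPolynomial (Fin 3) k) :=
  let x : MvPolynomial (Fin 3) k := X 0
  let y : MvPolynomial (Fin 3) k := X 1
  let z : MvPolynomial (Fin 3) k := X 2
  !![0, x ^ (1 + l₁), y ^ (1 + l₂), z ^ (1 + l₃);
     x ^ (1 + l₁), 0, z ^ (c - 1 - l₃), -y ^ (b - 1 - l₂);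
     y ^ (1 + l₂), -z ^ (c - 1 - l₃), 0, x ^ (a - 1 - l₁);
     z ^ (1 + l₃), y ^ (b - 1 - l₂), -x ^ (a - 1 - l₁), 0]

/-- The matrix `v_x` of Proposition `prop:mf:abc:rk2`. -/
noncomputable def vExt (k : Type*) [Field k] (a b c l₁ l₂ l₃ : ℕ) :
    Matrix (Fin 4) (Fin 4) (MvPolynomial (Fin 3) k) :=
  let x : MvPolynomial (Fin 3) k := X 0
  let y : MvPolynomial (Fin 3) k := X 1
  let z : MvPolynomial (Fin 3) k := X 2
  !![0, x ^ (a - 1 - l₁), y ^ (b - 1 - l₂), z ^ (c - 1 - l₃);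
     x ^ (a - 1 - l₁), 0, -z ^ (1 + l₃), y ^ (1 + l₂);
     y ^ (b - 1 - l₂), z ^ (1 + l₃), 0, -x ^ (1 + l₁);
     z ^ (c - 1 - l₃), -y ^ (1 + l₂), x ^ (1 + l₁), 0]

set_option maxHeartbeats 1000000 in
theorem stmt_0 (k : Type*) [Field k] (a b c l₁ l₂ l₃ : ℕ)
    (ha : 2 ≤ a) (hb : 2 ≤ b) (hc : 2 ≤ c)
    (hl₁ : l₁ ≤ a - 2) (hl₂ : l₂ ≤ b - 2) (hl₃ : l₃ ≤ c - 2) :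
    uExt k a b c l₁ l₂ l₃ * vExt k a b c l₁ l₂ l₃ =
        ((X 0 ^ a + X 1 ^ b + X 2 ^ c : MvPolynomial (Fin 3) k)) •
          (1 : Matrix (Fin 4) (Fin 4) (MvPolynomial (Fin 3) k)) ∧
      vExt k a b c l₁ l₂ l₃ * uExt k a b c l₁ l₂ l₃ =
        ((X 0 ^ a + X 1 ^ b + X 2 ^ c : MvPolynomial (Fin 3) k)) •
          (1 : Matrix (Fin 4) (Fin 4) (MvPolynomial (Fin 3) k)) := by

  have h1 : (1 + l₁) + (a - 1 - l₁) = a := by omega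
  have h2 : (1 + l₂) + (b - 1 - l₂) = b := by omega
  have h3 : (1 + l₃) + (c - 1 - l₃) = c := by omega
  have hx : (X 0 : MvPolynomial (Fin 3) k) ^ (1 + l₁) * X 0 ^ (a - 1 - l₁) = X 0 ^ a := by
    rw [← pow_add, h1]
  have hy : (X 1 : MvPolynomial (Fin 3) k) ^ (1 + l₂) * X 1 ^ (b - 1 - l₂) = X 1 ^ b := by
    rw [← pow_add, h2]
  have hz : (X 2 : MvPolynomial (Fin 3) k) ^ (1 + l₃) * X 2 ^ (c - 1 - l₃) = X 2 ^ c := by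
    rw [← pow_add, h3]
  constructor <;>
  · refine Matrix.ext fun i j => ?_
    fin_cases i <;> fin_cases j <;>
      simp [uExt, vExt, Matrix.mul_apply, Fin.sum_univ_succ, Matrix.one_apply,
        Matrix.smul_apply] <;>
      first
        | linear_combination hx + hy + hz
        | ring
end

section
/- Let a, b, c ≥ 2 be integers and let H be the subgroup of ℤ³ generated by (a, −b, 0) and (0, b, −c). If m = (m₁, m₂, m₃) and n = (n₁, n₂, n₃) are triples of nonnegative integers with m₁·bc + m₂·ca + m₃·ab < abc and n₁·bc + n₂·ca + n₃·ab < abc, and m − n ∈ H, then m = n. (Consequently, for 0 < δ(u) < δ(c̄) every homogeneous component of the L(a,b,c)-graded polynomial ring k[x₁,x₂,x₃] of degree u is at most one-dimensional, spanned by a single monomial x₁^{l₁}x₂^{l₂}x₃^{l₃} with 0 ≤ lᵢ ≤ pᵢ−1.) -/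
theorem stmt_13 (a b c : ℤ) (ha : 2 ≤ a) (hb : 2 ≤ b) (hc : 2 ≤ c)
    (m n : ℤ × ℤ × ℤ)
    (hm0 : 0 ≤ m.1) (hm1 : 0 ≤ m.2.1) (hm2 : 0 ≤ m.2.2)
    (hn0 : 0 ≤ n.1) (hn1 : 0 ≤ n.2.1) (hn2 : 0 ≤ n.2.2)
    (hm : m.1 * (b * c) + m.2.1 * (c * a) + m.2.2 * (a * b) < a * b * c)
    (hn : n.1 * (b * c) + n.2.1 * (c * a) + n.2.2 * (a * b) < a * b * c)
    (hmn : m - n ∈ AddSubgroup.closure {((a, -b, 0) : ℤ × ℤ × ℤ), (0, b, -c)}) :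
    m = n := by
  rw [AddSubgroup.mem_closure_pair] at hmn
  obtain ⟨s, t, hst⟩ := hmn
  have ha0 : (0:ℤ) < a := by linarith
  have hb0 : (0:ℤ) < b := by linarith
  have hc0 : (0:ℤ) < c := by linarith
  obtain ⟨m1, m2, m3⟩ := m
  obtain ⟨n1, n2, n3⟩ := n
  simp only [Prod.smul_mk, Prod.mk_add_mk, Prod.mk_sub_mk, smul_eq_mul, Prod.mk.injEq] at hst
  simp only at hm0 hm1 hm2 hn0 hn1 hn2 hm hn
  have h1 : m1 - n1 = s * a := by linarith [hst.1]
  have h2 : m2 - n2 = (t - s) * b := by nlinarith [hst.2.1]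
  have h3 : m3 - n3 = -t * c := by nlinarith [hst.2.2]
  -- bounds: each coordinate < a, b, c resp.
  have k1 : 0 ≤ m2 * (c * a) := mul_nonneg hm1 (by positivity)
  have k2 : 0 ≤ m3 * (a * b) := mul_nonneg hm2 (by positivity)
  have k3 : 0 ≤ m1 * (b * c) := mul_nonneg hm0 (by positivity)
  have l1 : 0 ≤ n2 * (c * a) := mul_nonneg hn1 (by positivity)
  have l2 : 0 ≤ n3 * (a * b) := mul_nonneg hn2 (by positivity)
  have l3 : 0 ≤ n1 * (b * c) := mul_nonneg hn0 (by positivity)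
  have hm1a : m1 < a := by
    have : m1 * (b * c) < a * (b * c) := by linarith
    exact lt_of_mul_lt_mul_right this (by positivity)
  have hn1a : n1 < a := by
    have : n1 * (b * c) < a * (b * c) := by linarith
    exact lt_of_mul_lt_mul_right this (by positivity)
  have hm3c : m3 < c := by
    have : m3 * (a * b) < c * (a * b) := by linarith
    exact lt_of_mul_lt_mul_right this (by positivity)
  have hn3c : n3 < c := by
    have : n3 * (a * b) < c * (a * b) := by linarith
    exact lt_of_mul_lt_mul_right this (by positivity)
  have hs0 : s = 0 := by
    have p1 : s * a < 1 * a := by linarith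
    have p2 : (-1) * a < s * a := by linarith
    have := lt_of_mul_lt_mul_right p1 ha0.le
    have := lt_of_mul_lt_mul_right p2 ha0.le
    omega
  have ht0 : t = 0 := by
    have p1 : (-t) * c < 1 * c := by linarith
    have p2 : (-1) * c < (-t) * c := by linarith
    have := lt_of_mul_lt_mul_right p1 hc0.le
    have := lt_of_mul_lt_mul_right p2 hc0.le
    omega
  rw [hs0] at h1 h2
  rw [ht0] at h2 h3
  have e1 : m1 = n1 := by linarith
  have e2 : m2 = n2 := by linarith
  have e3 : m3 = n3 := by linarith
  rw [e1, e2, e3]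
end

section
/- In the group L(2,3,4) (generators x̄₁, x̄₂, x̄₃ with 2x̄₁ = 3x̄₂ = 4x̄₃), the element x̄₁ − 2x̄₃ is nonzero and satisfies 2(x̄₁ − 2x̄₃) = 0; that is, x̄₁ − 2x̄₃ has order exactly two. Moreover, with ω̄ = c̄ − x̄₁ − x̄₂ − x̄₃ one has x̄₁ = −6ω̄ + (x̄₁ − 2x̄₃). -/
/-- The subgroup of relations defining the group `L(a,b,c)`. -/
def Lrel (a b c : ℤ) : AddSubgroup (ℤ × ℤ × ℤ) :=
  AddSubgroup.closure {((a, -b, 0) : ℤ × ℤ × ℤ), (0, b, -c)}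

/-- The rank-one abelian group `L(a,b,c)` on generators `x̄₁, x̄₂, x̄₃` with relations
`a·x̄₁ = b·x̄₂ = c·x̄₃`, realized as the quotient of `ℤ³` by those relations. -/
abbrev Lgrp (a b c : ℤ) : Type := (ℤ × ℤ × ℤ) ⧸ Lrel a b c

/-- The generator `x̄₁` of `L(a,b,c)`. -/
def Lx₁ (a b c : ℤ) : Lgrp a b c := QuotientAddGroup.mk (1, 0, 0)

/-- The generator `x̄₂` of `L(a,b,c)`. -/
def Lx₂ (a b c : ℤ) : Lgrp a b c := QuotientAddGroup.mk (0, 1, 0)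

/-- The generator `x̄₃` of `L(a,b,c)`. -/
def Lx₃ (a b c : ℤ) : Lgrp a b c := QuotientAddGroup.mk (0, 0, 1)

/-- The canonical element `c̄ = a·x̄₁` of `L(a,b,c)`. -/
def Lc (a b c : ℤ) : Lgrp a b c := a • Lx₁ a b c

/-- The dualizing element `ω̄ = c̄ − x̄₁ − x̄₂ − x̄₃` of `L(a,b,c)`. -/
def Lω (a b c : ℤ) : Lgrp a b c := Lc a b c - Lx₁ a b c - Lx₂ a b c - Lx₃ a b c

/-! Both claimed identities are integer combinations of the defining relations
`2x̄₁ = 3x̄₂` and `3x̄₂ = 4x̄₃`. Non-vanishing of `x̄₁ − 2x̄₃` is detected by reducing the first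
coordinate modulo `a = 2`, which is well defined on `L(a,b,c)` because both relations have first
coordinate in `aℤ`. -/

namespace Lgrp

variable {a b c : ℤ}

theorem smul_Lx₁_eq_smul_Lx₂ : a • Lx₁ a b c = b • Lx₂ a b c := by
  have h : ((a, -b, 0) : ℤ × ℤ × ℤ) ∈ Lrel a b c := AddSubgroup.subset_closure (by simp)
  rw [Lx₁, Lx₂, ← QuotientAddGroup.mk_zsmul, ← QuotientAddGroup.mk_zsmul,
    QuotientAddGroup.eq_iff_sub_mem]
  simpa [sub_eq_add_neg] using h

theorem smul_Lx₂_eq_smul_Lx₃ : b • Lx₂ a b c = c • Lx₃ a b c := by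
  have h : ((0, b, -c) : ℤ × ℤ × ℤ) ∈ Lrel a b c := AddSubgroup.subset_closure (by simp)
  rw [Lx₂, Lx₃, ← QuotientAddGroup.mk_zsmul, ← QuotientAddGroup.mk_zsmul,
    QuotientAddGroup.eq_iff_sub_mem]
  simpa [sub_eq_add_neg] using h

variable (a b c) in
def fstMod : Lgrp a b c →+ ZMod a.natAbs :=
  QuotientAddGroup.lift _ ((Int.castAddHom _).comp (AddMonoidHom.fst _ _)) <| by
    rw [Lrel, AddSubgroup.closure_le]
    rintro v (rfl | rfl) <;> simp [ZMod.intCast_zmod_eq_zero_iff_dvd]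

theorem fstMod_Lx₁ : fstMod a b c (Lx₁ a b c) = 1 := by simp [fstMod, Lx₁]

theorem fstMod_Lx₃ : fstMod a b c (Lx₃ a b c) = 0 := by simp [fstMod, Lx₃]

end Lgrp

theorem stmt_15 :
    Lx₁ 2 3 4 - (2 : ℤ) • Lx₃ 2 3 4 ≠ 0 ∧
    (2 : ℤ) • (Lx₁ 2 3 4 - (2 : ℤ) • Lx₃ 2 3 4) = 0 ∧
    Lx₁ 2 3 4 = (-6 : ℤ) • Lω 2 3 4 + (Lx₁ 2 3 4 - (2 : ℤ) • Lx₃ 2 3 4) := by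
  have h₁₂ : (2 : ℤ) • Lx₁ 2 3 4 = (3 : ℤ) • Lx₂ 2 3 4 := Lgrp.smul_Lx₁_eq_smul_Lx₂
  have h₂₃ : (3 : ℤ) • Lx₂ 2 3 4 = (4 : ℤ) • Lx₃ 2 3 4 := Lgrp.smul_Lx₂_eq_smul_Lx₃
  refine ⟨fun h => ?_, ?_, ?_⟩
  · have h₁ := congrArg (Lgrp.fstMod 2 3 4) h
    rw [map_sub, map_zsmul, Lgrp.fstMod_Lx₁, Lgrp.fstMod_Lx₃, map_zero] at h₁
    simp at h₁
  · linear_combination (norm := module) h₁₂ + h₂₃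
  · simp only [Lω, Lc]
    linear_combination (norm := module) (3 : ℤ) • h₁₂ + h₂₃
end

section
/- In the group L(2,3,3) (generators x̄₁, x̄₂, x̄₃ with 2x̄₁ = 3x̄₂ = 3x̄₃), the element ū = x̄₂ − x̄₃ has order exactly three and generates the torsion subgroup of L(2,3,3); moreover, with ω̄ = c̄ − x̄₁ − x̄₂ − x̄₃ one has x̄₁ = −3ω̄. -/
/-!
The degree map `x̄₁ ↦ bc, x̄₂ ↦ ac, x̄₃ ↦ ab` to the torsion-free group `ℤ` kills all torsion of
`L(a,b,c)`. In `L(a,b,b)` with `a, b` coprime, a degree-zero element `x x̄₁ + y x̄₂ + z x̄₃` has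
`x = ka` and `y + z = -kb`, so the relation `a·x̄₁ = b·x̄₂` turns it into `-z (x̄₂ - x̄₃)`.
The element `x̄₂ - x̄₃` is killed by `b` since `b·x̄₂ = b·x̄₃`, and has order at least `b` because
`(x, y, z) ↦ y mod b` is well defined on `L(a,b,c)` and sends it to `1`.
-/

namespace Lgrp

variable {a b c : ℤ}

def lift {A : Type*} [AddCommGroup A] (f : ℤ × ℤ × ℤ →+ A) (ha : f (a, -b, 0) = 0)
    (hc : f (0, b, -c) = 0) : Lgrp a b c →+ A :=
  QuotientAddGroup.lift _ f <| (AddSubgroup.closure_le f.ker).2 <| by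
    rintro _ (rfl | rfl) <;> assumption

@[simp]
theorem lift_mk {A : Type*} [AddCommGroup A] (f : ℤ × ℤ × ℤ →+ A) (ha : f (a, -b, 0) = 0)
    (hc : f (0, b, -c) = 0) (p : ℤ × ℤ × ℤ) : lift f ha hc (QuotientAddGroup.mk p) = f p :=
  rfl

theorem mk_eq_smul_Lx (x y z : ℤ) :
    (QuotientAddGroup.mk (x, y, z) : Lgrp a b c) =
      x • Lx₁ a b c + y • Lx₂ a b c + z • Lx₃ a b c := by
  simp only [Lx₁, Lx₂, Lx₃, ← QuotientAddGroup.mk_zsmul, ← QuotientAddGroup.mk_add]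
  congr 1
  simp

variable (a b c) in
def deg : Lgrp a b c →+ ℤ :=
  lift (AddMonoidHom.mk' (fun p => b * c * p.1 + a * c * p.2.1 + a * b * p.2.2)
    (fun p q => by simp only [Prod.fst_add, Prod.snd_add]; ring))
    (by simp only [AddMonoidHom.mk'_apply]; ring) (by simp only [AddMonoidHom.mk'_apply]; ring)

theorem deg_mk (x y z : ℤ) :
    deg a b c (QuotientAddGroup.mk (x, y, z)) = b * c * x + a * c * y + a * b * z := rfl

theorem deg_eq_zero_of_isOfFinAddOrder {v : Lgrp a b c} (hv : IsOfFinAddOrder v) :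
    deg a b c v = 0 :=
  (isOfFinAddOrder_iff_eq_zero _).1 ((deg a b c).isOfFinAddOrder hv)

theorem exists_eq_zsmul_of_deg_eq_zero (hab : IsCoprime a b) (ha : a ≠ 0) (hb : b ≠ 0)
    {v : Lgrp a b b} (hv : deg a b b v = 0) : ∃ m : ℤ, v = m • (Lx₂ a b b - Lx₃ a b b) := by
  obtain ⟨⟨x, y, z⟩, rfl⟩ := QuotientAddGroup.mk_surjective v
  rw [deg_mk] at hv
  obtain ⟨k, rfl⟩ : a ∣ x :=
    hab.dvd_of_dvd_mul_left ⟨-(y + z), mul_left_cancel₀ hb (by linear_combination hv)⟩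
  have hyz : y = -(b * k) - z := by
    have : a * b * (b * k + y + z) = 0 := by linear_combination hv
    simp only [mul_eq_zero, ha, hb, false_or] at this
    linarith
  refine ⟨-z, ?_⟩
  rw [mk_eq_smul_Lx, hyz, mul_comm, mul_smul, smul_Lx₁_eq_smul_Lx₂]
  module

variable (a c) in
def residue (b : ℕ) : Lgrp a b c →+ ZMod b :=
  lift ((Int.castAddHom (ZMod b)).comp ((AddMonoidHom.fst ℤ ℤ).comp (AddMonoidHom.snd ℤ _)))
    (by simp) (by simp)

theorem addOrderOf_Lx₂_sub_Lx₃ (a : ℤ) (b : ℕ) : addOrderOf (Lx₂ a b b - Lx₃ a b b) = b := by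
  apply Nat.dvd_antisymm
  · apply addOrderOf_dvd_of_nsmul_eq_zero
    rw [nsmul_sub, ← natCast_zsmul, ← natCast_zsmul, smul_Lx₂_eq_smul_Lx₃, sub_self]
  · have hres : residue a b b (Lx₂ a b b - Lx₃ a b b) = 1 := by
      simp [Lx₂, Lx₃, residue]
    simpa [hres, ZMod.addOrderOf_one] using
      addOrderOf_map_dvd (residue a b b) (Lx₂ a b b - Lx₃ a b b)

end Lgrp

open Lgrp in
theorem stmt_16 :
    addOrderOf (Lx₂ 2 3 3 - Lx₃ 2 3 3) = 3 ∧
    (∀ v : Lgrp 2 3 3, IsOfFinAddOrder v → ∃ m : ℤ, v = m • (Lx₂ 2 3 3 - Lx₃ 2 3 3)) ∧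
    Lx₁ 2 3 3 = (-3 : ℤ) • Lω 2 3 3 := by
  refine ⟨by simpa using addOrderOf_Lx₂_sub_Lx₃ 2 3, fun v hv => ?_, ?_⟩
  · exact exists_eq_zsmul_of_deg_eq_zero (by norm_num [Int.isCoprime_iff_gcd_eq_one])
      (by norm_num) (by norm_num) (deg_eq_zero_of_isOfFinAddOrder hv)
  · unfold Lω Lc
    linear_combination (norm := module) (2 : ℤ) • smul_Lx₁_eq_smul_Lx₂ + smul_Lx₂_eq_smul_Lx₃
end
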